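/- arXiv:1710.05899 — 10 statements merged into one kernel-verified Lean document; each statement's English description precedes it below -/
import Mathlib

section
/- If a randomized algorithm A : (Fin n → D) → PMF O is ε-differentially private, then it is ε-differentially private as intervention on a data point for every population: for every population distribution P : PMF (Fin n → D), every index i : Fin n, all values d, d' : D, and every output o : O, ∑_{x} P x * A (Function.update x i d) o ≤ ENNReal.ofReal (Real.exp ε) * ∑_{x} P x * A (Function.update x i d') o; that is, Pr[O=o ∣ do(D_i=d)] ≤ e^ε · Pr[O=o ∣ do(D_i=d')]. -/
theorem dp_implies_dp_as_intervention_on_a_data_point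
    {n : ℕ} {D O : Type} [Fintype D] [Nonempty D] [Fintype O] [Nonempty O]
    (A : (Fin n → D) → PMF O) (ε : ℝ)
    (hdp : ∀ (x : Fin n → D) (i : Fin n) (d' : D) (o : O),
        A x o ≤ ENNReal.ofReal (Real.exp ε) * A (Function.update x i d') o) :
    ∀ (P : PMF (Fin n → D)) (i : Fin n) (d d' : D) (o : O),
      ∑ x : Fin n → D, P x * A (Function.update x i d) o
        ≤ ENNReal.ofReal (Real.exp ε) * ∑ x : Fin n → D, P x * A (Function.update x i d') o := by
  intro P i d d' o
  rw [Finset.mul_sum]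
  apply Finset.sum_le_sum
  intro x _
  have h := hdp (Function.update x i d) i d' o
  rw [Function.update_idem] at h
  calc P x * A (Function.update x i d) o
      ≤ P x * (ENNReal.ofReal (Real.exp ε) * A (Function.update x i d') o) :=
        mul_le_mul_right h _
    _ = ENNReal.ofReal (Real.exp ε) * (P x * A (Function.update x i d') o) := by ring
end

section
/- Differential privacy as intervention on a single data point with respect to a fixed population distribution is strictly weaker than differential privacy: there exist n : ℕ, nonempty finite types D and O, a randomized algorithm A : (Fin n → D) → PMF O, and a population distribution P : PMF (Fin n → D) such that for all i : Fin n, all d, d' : D, and all o : O one has ∑_{x} P x * A (Function.update x i d) o ≤ ∑_{x} P x * A (Function.update x i d') o (so Pr[O=o ∣ do(D_i=d)] = Pr[O=o ∣ do(D_i=d')] for all interventions), yet for every ε : ℝ, A is not ε-differentially private. (A witness: n = 2, D = Fin 3, O = Bool, with A sending the database ⟨2,2⟩ to the point mass on false and every other database to the uniform distribution on Bool, and P uniform over databases both of whose entries lie in {0, 1}.) -/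
theorem dp_as_intervention_on_data_point_strictly_weaker :
    ∃ (n : ℕ) (D O : Type) (_ : Fintype D) (_ : Nonempty D) (_ : Fintype O) (_ : Nonempty O)
      (A : (Fin n → D) → PMF O) (P : PMF (Fin n → D)),
      (∀ (i : Fin n) (d d' : D) (o : O),
          ∑ x : Fin n → D, P x * A (Function.update x i d) o
            ≤ ∑ x : Fin n → D, P x * A (Function.update x i d') o) ∧
      (∀ ε : ℝ, ¬ (∀ (x : Fin n → D) (i : Fin n) (d' : D) (o : O),
          A x o ≤ ENNReal.ofReal (Real.exp ε) * A (Function.update x i d') o)) := by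
  classical
  refine ⟨2, Fin 3, Bool, inferInstance, inferInstance, inferInstance, inferInstance,
    fun x => if x = fun _ => 2 then PMF.pure false else PMF.uniformOfFintype Bool,
    (PMF.uniformOfFintype (Fin 2 → Fin 2)).map (fun f i => (f i).castSucc), ?_, ?_⟩
  · intro i d d' o
    apply le_of_eq
    apply Finset.sum_congr rfl
    intro x _
    by_cases hx : ((PMF.uniformOfFintype (Fin 2 → Fin 2)).map (fun f i => (f i).castSucc)) x = 0
    · simp [hx]
    · have hsup : x ∈ ((PMF.uniformOfFintype (Fin 2 → Fin 2)).map
          (fun f i => (f i).castSucc)).support := hx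
      rw [PMF.support_map] at hsup
      obtain ⟨f, -, rfl⟩ := hsup
      have key : ∀ e : Fin 3, (Function.update (fun j => (f j).castSucc) i e) ≠ fun _ => 2 := by
        intro e h
        have hne : i + 1 ≠ i := by fin_cases i <;> decide
        have h1 := congrFun h (i + 1)
        rw [Function.update_of_ne hne] at h1
        have := (f (i + 1)).isLt
        simp [Fin.ext_iff, Fin.castSucc, Fin.castAdd, Fin.castLE] at h1
        omega
      simp [key d, key d']
  · intro ε h
    have h1 := h (Function.update (fun _ => (2 : Fin 3)) 0 0) 0 2 true
    have e1 : Function.update (Function.update (fun _ => (2 : Fin 3)) 0 0) 0 2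
        = fun _ => (2 : Fin 3) := by
      funext j; by_cases hj : j = 0 <;> simp [hj]
    
    have e2 : Function.update (fun _ => (2 : Fin 3)) 0 0 ≠ fun _ => (2 : Fin 3) := by
      intro h2
      have := congrFun h2 0
      simp at this
    simp only [e1, if_pos rfl, if_neg e2] at h1
    simp [PMF.uniformOfFintype_apply, PMF.pure_apply] at h1
end

section
/- A randomized algorithm A : (Fin n → D) → PMF O is ε-differentially private if and only if it is ε-differentially private as universal intervention on a data point, i.e., if and only if for every population distribution P : PMF (Fin n → D), every index i : Fin n, all values d, d' : D, and every output o : O, ∑_{x} P x * A (Function.update x i d) o ≤ ENNReal.ofReal (Real.exp ε) * ∑_{x} P x * A (Function.update x i d') o. -/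
theorem dp_iff_universal_intervention_on_data_point
    {n : ℕ} {D O : Type} [Fintype D] [Nonempty D] [Fintype O] [Nonempty O]
    (A : (Fin n → D) → PMF O) (ε : ℝ) :
    (∀ (x : Fin n → D) (i : Fin n) (d' : D) (o : O),
        A x o ≤ ENNReal.ofReal (Real.exp ε) * A (Function.update x i d') o)
    ↔
    (∀ (P : PMF (Fin n → D)) (i : Fin n) (d d' : D) (o : O),
        ∑ x : Fin n → D, P x * A (Function.update x i d) o
          ≤ ENNReal.ofReal (Real.exp ε) * ∑ x : Fin n → D, P x * A (Function.update x i d') o) := by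
  constructor
  · intro h P i d d' o
    rw [Finset.mul_sum]
    refine Finset.sum_le_sum fun x _ => ?_
    rw [← mul_assoc, mul_comm (ENNReal.ofReal _) (P x), mul_assoc]
    refine mul_le_mul_right ?_ _
    have := h (Function.update x i d) i d' o
    rwa [Function.update_idem] at this
  · intro h x i d' o
    have := h (PMF.pure x) i (x i) d' o
    simp only [PMF.pure_apply] at this
    rw [Finset.sum_eq_single x (fun b _ hb => by simp [hb]) (by simp),
        Finset.sum_eq_single x (fun b _ hb => by simp [hb]) (by simp)] at this
    simpa [Function.update_eq_self] using this
end

section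
/- ε-Bayesian₀ differential privacy implies ε-differential privacy: if a randomized algorithm A : (Fin n → D) → PMF O satisfies, for every population distribution P : PMF (Fin n → D), every index i : Fin n, all values d, d' : D with Pr[D_i = d] > 0 and Pr[D_i = d'] > 0, and every output o : O, the bound Pr[O = o ∣ D_i = d] ≤ ENNReal.ofReal (Real.exp ε) * Pr[O = o ∣ D_i = d'], then A is ε-differentially private. -/
/-!
Feed the Bayesian bound the uniform prior on the two neighbouring databases `x` and
`Function.update x i d'`. Their `i`-th coordinates tell them apart (or they coincide), so
conditioning on `D_i = x i` recovers `A x` and conditioning on `D_i = d'` recovers `A x'`,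
and the Bayesian bound becomes the differential-privacy bound.
-/

open Finset

theorem Function.injOn_eval_pair_update {ι : Type*} {π : ι → Type*} [DecidableEq ι]
    (x : ∀ j, π j) (i : ι) (d : π i) :
    Set.InjOn (Function.eval i) {x, Function.update x i d} :=
  Set.injOn_pair.2 fun h => (Function.update_eq_self_iff.2 (by simpa using h.symm)).symm

namespace PMF

variable {α β : Type*} [Fintype α] [DecidableEq β]

theorem sum_fiber_pos (P : PMF α) (g : α → β) {a : α} (ha : a ∈ P.support) :
    0 < ∑ b ∈ univ.filter (fun b => g b = g a), P b :=
  (pos_iff_ne_zero.2 ha).trans_le <|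
    Finset.single_le_sum (f := P) (fun _ _ => zero_le) (by simp)

theorem sum_fiber_mul_div_sum_fiber_of_injOn (P : PMF α) {g : α → β}
    (hg : Set.InjOn g P.support) {a : α} (ha : a ∈ P.support) (f : α → ENNReal) :
    (∑ b ∈ univ.filter (fun b => g b = g a), P b * f b) /
        (∑ b ∈ univ.filter (fun b => g b = g a), P b) = f a := by
  have hfiber : ∀ b ∈ univ.filter (fun b => g b = g a), b ≠ a → P b = 0 := by
    intro b hb hne
    by_contra hb'
    exact hne (hg hb' ha (Finset.mem_filter.1 hb).2)
  have ha_mem : a ∈ univ.filter (fun b => g b = g a) := by simp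
  rw [Finset.sum_eq_single_of_mem a ha_mem fun b hb hne => by rw [hfiber b hb hne, zero_mul],
    Finset.sum_eq_single_of_mem a ha_mem hfiber, mul_comm,
    ENNReal.mul_div_cancel_right ha (P.apply_ne_top a)]

end PMF

theorem bayesian0_dp_implies_dp_general
    {n : ℕ} {D O : Type} [Fintype D] [DecidableEq D]
    (A : (Fin n → D) → PMF O) (ε : ℝ)
    (hbayes : ∀ (P : PMF (Fin n → D)) (i : Fin n) (d d' : D) (o : O),
        (∑ x ∈ Finset.univ.filter (fun x : Fin n → D => x i = d), P x) > 0 →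
        (∑ x ∈ Finset.univ.filter (fun x : Fin n → D => x i = d'), P x) > 0 →
        (∑ x ∈ Finset.univ.filter (fun x : Fin n → D => x i = d), P x * A x o) /
            (∑ x ∈ Finset.univ.filter (fun x : Fin n → D => x i = d), P x)
          ≤ ENNReal.ofReal (Real.exp ε) *
            ((∑ x ∈ Finset.univ.filter (fun x : Fin n → D => x i = d'), P x * A x o) /
              (∑ x ∈ Finset.univ.filter (fun x : Fin n → D => x i = d'), P x))) :
    ∀ (x : Fin n → D) (i : Fin n) (d' : D) (o : O),
      A x o ≤ ENNReal.ofReal (Real.exp ε) * A (Function.update x i d') o := by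
  intro x i d' o
  set x' := Function.update x i d'
  set P := PMF.uniformOfFinset {x, x'} ⟨x, by simp⟩
  have hsupp : P.support = {x, x'} :=
    (PMF.support_uniformOfFinset _).trans Finset.coe_pair
  have hx : x ∈ P.support := by simp [hsupp]
  have hx' : x' ∈ P.support := by simp [hsupp]
  have hinj : Set.InjOn (fun y : Fin n → D => y i) P.support :=
    hsupp ▸ Function.injOn_eval_pair_update x i d'
  have key := hbayes P i (x i) (x' i) o (P.sum_fiber_pos _ hx) (P.sum_fiber_pos _ hx')
  rwa [P.sum_fiber_mul_div_sum_fiber_of_injOn hinj hx,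
    P.sum_fiber_mul_div_sum_fiber_of_injOn hinj hx'] at key

theorem bayesian0_dp_implies_dp
    {n : ℕ} {D O : Type} [Fintype D] [DecidableEq D] [Nonempty D] [Fintype O] [Nonempty O]
    (A : (Fin n → D) → PMF O) (ε : ℝ)
    (hbayes : ∀ (P : PMF (Fin n → D)) (i : Fin n) (d d' : D) (o : O),
        (∑ x ∈ Finset.univ.filter (fun x : Fin n → D => x i = d), P x) > 0 →
        (∑ x ∈ Finset.univ.filter (fun x : Fin n → D => x i = d'), P x) > 0 →
        (∑ x ∈ Finset.univ.filter (fun x : Fin n → D => x i = d), P x * A x o) /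
            (∑ x ∈ Finset.univ.filter (fun x : Fin n → D => x i = d), P x)
          ≤ ENNReal.ofReal (Real.exp ε) *
            ((∑ x ∈ Finset.univ.filter (fun x : Fin n → D => x i = d'), P x * A x o) /
              (∑ x ∈ Finset.univ.filter (fun x : Fin n → D => x i = d'), P x))) :
    ∀ (x : Fin n → D) (i : Fin n) (d' : D) (o : O),
      A x o ≤ ENNReal.ofReal (Real.exp ε) * A (Function.update x i d') o :=
  bayesian0_dp_implies_dp_general A ε hbayes
end

section
/- A randomized algorithm A : (Fin n → D) → PMF O is ε-differentially private if and only if it is ε-Bayesian₀ differentially private for independent data points, i.e., if and only if for every population distribution P : PMF (Fin n → D) with independent data points (P x = ∏ i, μ i (x i) for some marginals μ : Fin n → PMF D), every index i : Fin n, all values d, d' : D with Pr[D_i = d] > 0 and Pr[D_i = d'] > 0, and every output o : O, one has Pr[O = o ∣ D_i = d] ≤ ENNReal.ofReal (Real.exp ε) * Pr[O = o ∣ D_i = d']. -/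
/-!
Under a product distribution, conditioning on `D_i = d` leaves the other coordinates distributed
according to their own marginals, so `Pr[O = o ∣ D_i = d]` is the average of `A (x[i ↦ d]) o`
over those coordinates, with weights independent of `d`; ε-DP compares the two averages termwise.
Conversely, for a database `x` and a coordinate `i`, the product distribution that is uniform at
`i` and the point mass at `x j` at every other `j` gives every value of `D_i` positive mass and
`Pr[O = o ∣ D_i = d] = A (x[i ↦ d]) o`.
-/

open Finset Function ENNReal

section FiberSums

variable {ι D : Type*} [Fintype ι] [DecidableEq ι]

def prodExcept {R : Type*} [CommMonoid R] (w : ι → D → R) (i : ι) (x : ι → D) : R :=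
  ∏ j ∈ univ.erase i, w j (x j)

theorem prodExcept_update {R : Type*} [CommMonoid R] (w : ι → D → R) (i : ι) (x : ι → D)
    (d : D) : prodExcept w i (update x i d) = prodExcept w i x :=
  prod_congr rfl fun j hj => by rw [update_of_ne (ne_of_mem_erase hj)]

variable [Fintype D] [DecidableEq D]

theorem sum_fiber_comp_update {M : Type*} [AddCommMonoid M] (F : (ι → D) → M) (i : ι)
    (d d' : D) :
    ∑ x ∈ univ.filter (fun x : ι → D => x i = d), F (update x i d') =
      ∑ y ∈ univ.filter (fun y : ι → D => y i = d'), F y := by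
  refine sum_nbij' (update · i d') (update · i d) ?_ ?_ ?_ ?_ fun _ _ => rfl <;>
    intro x hx <;> simp_all

section CommSemiring

variable {R : Type*} [CommSemiring R] (w : ι → D → R) (i : ι)

theorem sum_fiber_prod_mul (F : (ι → D) → R) (d : D) :
    ∑ x ∈ univ.filter (fun x : ι → D => x i = d), (∏ j, w j (x j)) * F x =
      w i d * ∑ x ∈ univ.filter (fun x : ι → D => x i = d), prodExcept w i x * F x := by
  rw [mul_sum]
  refine sum_congr rfl fun x hx => ?_
  rw [← (mem_filter.1 hx).2, ← mul_prod_erase _ _ (mem_univ i), mul_assoc, prodExcept]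

theorem sum_fiber_prod (d : D) :
    ∑ x ∈ univ.filter (fun x : ι → D => x i = d), ∏ j, w j (x j) =
      w i d * ∑ x ∈ univ.filter (fun x : ι → D => x i = d), prodExcept w i x := by
  simpa using sum_fiber_prod_mul w i (fun _ => 1) d

theorem sum_fiber_prodExcept_mul (F : (ι → D) → R) (d d' : D) :
    ∑ x ∈ univ.filter (fun x : ι → D => x i = d), prodExcept w i x * F x =
      ∑ y ∈ univ.filter (fun y : ι → D => y i = d'),
        prodExcept w i y * F (update y i d) := by
  rw [← sum_fiber_comp_update _ i d' d]
  simp_rw [prodExcept_update]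

theorem sum_fiber_prodExcept (d d' : D) :
    ∑ x ∈ univ.filter (fun x : ι → D => x i = d), prodExcept w i x =
      ∑ y ∈ univ.filter (fun y : ι → D => y i = d'), prodExcept w i y := by
  simpa using sum_fiber_prodExcept_mul w i (fun _ => 1) d d'

end CommSemiring

theorem sum_fiber_prodExcept_mul_le (w : ι → D → ℝ≥0∞) (i : ι) (F : (ι → D) → ℝ≥0∞)
    (c : ℝ≥0∞) (hF : ∀ x e, F x ≤ c * F (update x i e)) (d d' : D) :
    ∑ x ∈ univ.filter (fun x : ι → D => x i = d), prodExcept w i x * F x ≤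
      c * ∑ x ∈ univ.filter (fun x : ι → D => x i = d'), prodExcept w i x * F x := by
  rw [sum_fiber_prodExcept_mul w i F d d', mul_sum]
  refine sum_le_sum fun y hy => ?_
  calc prodExcept w i y * F (update y i d)
      ≤ prodExcept w i y * (c * F (update (update y i d) i d')) := by gcongr; exact hF _ _
    _ = c * (prodExcept w i y * F y) := by
      rw [update_idem, ← (mem_filter.1 hy).2, update_eq_self]; ring

end FiberSums

noncomputable def PMF.pi {ι D : Type*} [Fintype ι] [DecidableEq ι] [Fintype D]
    (μ : ι → PMF D) : PMF (ι → D) :=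
  PMF.ofFintype (fun x => ∏ j, μ j (x j)) <| by
    rw [← Fintype.prod_sum]
    exact prod_eq_one fun j _ => by simpa using (μ j).tsum_coe

theorem PMF.pi_apply {ι D : Type*} [Fintype ι] [DecidableEq ι] [Fintype D] (μ : ι → PMF D)
    (x : ι → D) : PMF.pi μ x = ∏ j, μ j (x j) := rfl

section Privacy

variable {ι D O : Type*} [Fintype ι] [DecidableEq ι] [Fintype D] [DecidableEq D]

def IsDifferentiallyPrivate (A : (ι → D) → PMF O) (ε : ℝ) : Prop :=
  ∀ (x : ι → D) (i : ι) (d' : D) (o : O),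
    A x o ≤ ENNReal.ofReal (Real.exp ε) * A (update x i d') o

noncomputable def marginalProb (P : PMF (ι → D)) (i : ι) (d : D) : ℝ≥0∞ :=
  ∑ x ∈ univ.filter (fun x : ι → D => x i = d), P x

noncomputable def condProb (P : PMF (ι → D)) (A : (ι → D) → PMF O) (i : ι) (d : D) (o : O) :
    ℝ≥0∞ :=
  (∑ x ∈ univ.filter (fun x : ι → D => x i = d), P x * A x o) / marginalProb P i d

theorem condProb_eq_of_prod {P : PMF (ι → D)} {w : ι → D → ℝ≥0∞}
    (hP : ∀ x, P x = ∏ j, w j (x j)) (A : (ι → D) → PMF O) {i : ι} {d : D} (o : O)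
    (hd : 0 < marginalProb P i d) (hw : w i d ≠ ⊤) :
    condProb P A i d o =
      (∑ x ∈ univ.filter (fun x : ι → D => x i = d), prodExcept w i x * A x o) /
        ∑ x ∈ univ.filter (fun x : ι → D => x i = d), prodExcept w i x := by
  unfold condProb marginalProb at *
  simp only [hP] at hd ⊢
  rw [sum_fiber_prod_mul, sum_fiber_prod] at *
  exact ENNReal.mul_div_mul_left _ _ (left_ne_zero_of_mul hd.ne') hw

theorem condProb_le_of_isDifferentiallyPrivate {A : (ι → D) → PMF O} {ε : ℝ}
    (hA : IsDifferentiallyPrivate A ε) {P : PMF (ι → D)} {μ : ι → PMF D}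
    (hP : ∀ x, P x = ∏ j, μ j (x j)) {i : ι} {d d' : D} {o : O}
    (hd : 0 < marginalProb P i d) (hd' : 0 < marginalProb P i d') :
    condProb P A i d o ≤ ENNReal.ofReal (Real.exp ε) * condProb P A i d' o := by
  rw [condProb_eq_of_prod hP A o hd (PMF.apply_ne_top _ _),
    condProb_eq_of_prod hP A o hd' (PMF.apply_ne_top _ _), sum_fiber_prodExcept _ i d' d,
    ← mul_div_assoc]
  exact ENNReal.div_le_div_right (sum_fiber_prodExcept_mul_le _ i _ _ (hA · i · o) d d') _

theorem sum_fiber_prodExcept_pure_mul {μ : ι → PMF D} {x : ι → D} {i : ι}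
    (hμ : ∀ j ≠ i, μ j = PMF.pure (x j)) (F : (ι → D) → ℝ≥0∞) (e : D) :
    ∑ y ∈ univ.filter (fun y : ι → D => y i = e), prodExcept (fun j => ⇑(μ j)) i y * F y =
      F (update x i e) := by
  rw [sum_eq_single_of_mem (update x i e) (by simp)]
  · rw [prodExcept_update, prodExcept, prod_eq_one fun j hj => ?_, one_mul]
    rw [hμ j (ne_of_mem_erase hj), PMF.pure_apply_self]
  · intro y hy hne
    obtain ⟨j, hj⟩ := Function.ne_iff.1 hne
    have hji : j ≠ i := by rintro rfl; simp_all
    rw [update_of_ne hji] at hj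
    rw [prodExcept, prod_eq_zero (mem_erase.2 ⟨hji, mem_univ j⟩), zero_mul]
    rw [hμ j hji, PMF.pure_apply_of_ne _ _ hj]

theorem sum_fiber_prodExcept_pure {μ : ι → PMF D} {x : ι → D} {i : ι}
    (hμ : ∀ j ≠ i, μ j = PMF.pure (x j)) (e : D) :
    ∑ y ∈ univ.filter (fun y : ι → D => y i = e), prodExcept (fun j => ⇑(μ j)) i y = 1 := by
  simpa using sum_fiber_prodExcept_pure_mul hμ (fun _ => 1) e

theorem marginalProb_pi_of_pure {μ : ι → PMF D} {x : ι → D} {i : ι}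
    (hμ : ∀ j ≠ i, μ j = PMF.pure (x j)) (e : D) : marginalProb (PMF.pi μ) i e = μ i e := by
  simp only [marginalProb, PMF.pi_apply]
  rw [sum_fiber_prod, sum_fiber_prodExcept_pure hμ, mul_one]

theorem condProb_pi_of_pure {μ : ι → PMF D} {x : ι → D} {i : ι}
    (hμ : ∀ j ≠ i, μ j = PMF.pure (x j)) (A : (ι → D) → PMF O) {e : D} (o : O)
    (he : μ i e ≠ 0) : condProb (PMF.pi μ) A i e o = A (update x i e) o := by
  rw [condProb_eq_of_prod (PMF.pi_apply μ) A o
      (by rw [marginalProb_pi_of_pure hμ]; exact pos_iff_ne_zero.2 he) (PMF.apply_ne_top _ _),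
    sum_fiber_prodExcept_pure_mul hμ, sum_fiber_prodExcept_pure hμ, div_one]

theorem isDifferentiallyPrivate_of_condProb_le {A : (ι → D) → PMF O} {ε : ℝ}
    (h : ∀ (μ : ι → PMF D) (i : ι) (d d' : D) (o : O),
      0 < marginalProb (PMF.pi μ) i d → 0 < marginalProb (PMF.pi μ) i d' →
        condProb (PMF.pi μ) A i d o ≤
          ENNReal.ofReal (Real.exp ε) * condProb (PMF.pi μ) A i d' o) :
    IsDifferentiallyPrivate A ε := by
  intro x i d' o
  have : Nonempty D := ⟨x i⟩
  set μ := update (fun j => PMF.pure (x j)) i (PMF.uniformOfFintype D)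
  have hμ : ∀ j ≠ i, μ j = PMF.pure (x j) := fun j hj => update_of_ne hj _ _
  have hpos : ∀ e, μ i e ≠ 0 := by simp [μ]
  have := h μ i (x i) d' o
    (by rw [marginalProb_pi_of_pure hμ]; exact pos_iff_ne_zero.2 (hpos _))
    (by rw [marginalProb_pi_of_pure hμ]; exact pos_iff_ne_zero.2 (hpos _))
  rwa [condProb_pi_of_pure hμ A o (hpos _), condProb_pi_of_pure hμ A o (hpos _),
    update_eq_self] at this

end Privacy

theorem dp_iff_independent_bayesian0_dp_general
    {n : ℕ} {D O : Type} [Fintype D] [DecidableEq D]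
    (A : (Fin n → D) → PMF O) (ε : ℝ) :
    (∀ (x : Fin n → D) (i : Fin n) (d' : D) (o : O),
        A x o ≤ ENNReal.ofReal (Real.exp ε) * A (Function.update x i d') o)
    ↔
    (∀ (P : PMF (Fin n → D)),
        (∃ μ : Fin n → PMF D, ∀ x : Fin n → D, P x = ∏ i : Fin n, μ i (x i)) →
        ∀ (i : Fin n) (d d' : D) (o : O),
          (∑ x ∈ Finset.univ.filter (fun x : Fin n → D => x i = d), P x) > 0 →
          (∑ x ∈ Finset.univ.filter (fun x : Fin n → D => x i = d'), P x) > 0 →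
          (∑ x ∈ Finset.univ.filter (fun x : Fin n → D => x i = d), P x * A x o) /
              (∑ x ∈ Finset.univ.filter (fun x : Fin n → D => x i = d), P x)
            ≤ ENNReal.ofReal (Real.exp ε) *
              ((∑ x ∈ Finset.univ.filter (fun x : Fin n → D => x i = d'), P x * A x o) /
                (∑ x ∈ Finset.univ.filter (fun x : Fin n → D => x i = d'), P x))) :=
  ⟨fun hA _ ⟨_, hP⟩ _ _ _ _ hd hd' => condProb_le_of_isDifferentiallyPrivate hA hP hd hd',
    fun h => isDifferentiallyPrivate_of_condProb_le fun μ i d d' o =>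
      h _ ⟨μ, PMF.pi_apply μ⟩ i d d' o⟩

theorem dp_iff_independent_bayesian0_dp
    {n : ℕ} {D O : Type} [Fintype D] [DecidableEq D] [Nonempty D] [Fintype O] [Nonempty O]
    (A : (Fin n → D) → PMF O) (ε : ℝ) :
    (∀ (x : Fin n → D) (i : Fin n) (d' : D) (o : O),
        A x o ≤ ENNReal.ofReal (Real.exp ε) * A (Function.update x i d') o)
    ↔
    (∀ (P : PMF (Fin n → D)),
        (∃ μ : Fin n → PMF D, ∀ x : Fin n → D, P x = ∏ i : Fin n, μ i (x i)) →
        ∀ (i : Fin n) (d d' : D) (o : O),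
          (∑ x ∈ Finset.univ.filter (fun x : Fin n → D => x i = d), P x) > 0 →
          (∑ x ∈ Finset.univ.filter (fun x : Fin n → D => x i = d'), P x) > 0 →
          (∑ x ∈ Finset.univ.filter (fun x : Fin n → D => x i = d), P x * A x o) /
              (∑ x ∈ Finset.univ.filter (fun x : Fin n → D => x i = d), P x)
            ≤ ENNReal.ofReal (Real.exp ε) *
              ((∑ x ∈ Finset.univ.filter (fun x : Fin n → D => x i = d'), P x * A x o) /
                (∑ x ∈ Finset.univ.filter (fun x : Fin n → D => x i = d'), P x))) :=
  dp_iff_independent_bayesian0_dp_general A ε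
end

section
/- For independent data points, conditioning on a single data point coincides with intervening on it: if the population distribution P : PMF (Fin n → D) has independent data points with marginals μ : Fin n → PMF D (P x = ∏ i, μ i (x i) for all x), then for every index i : Fin n, every value d : D with μ i d > 0, and every output o : O, the conditional probability equals the interventional probability: Pr[O = o ∣ D_i = d] = ∑_{x} P x * A (Function.update x i d) o. -/
/-!
Split `x` into its `i`-th coordinate and the others. Under a product distribution the weight of
`x` is `μ i (x i)` times a weight of the others, and `update x i d` depends on the others only.
So with `S` the sum, over the others, of their weight times `A (update x i d) o`, the numerator
is `μ i d * S`, the interventional probability is `(∑ c, μ i c) * S = S`, and the denominator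
is `μ i d`.
-/

open Finset Function
open scoped ENNReal

theorem PMF.sum_coe {α : Type*} [Fintype α] (p : PMF α) : ∑ a, p a = 1 := by
  rw [← tsum_fintype (L := .unconditional _), p.tsum_coe]

namespace Equiv

variable {ι D : Type*} [DecidableEq ι] (i : ι)

@[simp]
theorem funSplitAt_symm_apply_self (c : D) (r : {j // j ≠ i} → D) :
    (funSplitAt i D).symm (c, r) i = c := by
  simp

theorem update_funSplitAt_symm (c d : D) (r : {j // j ≠ i} → D) :
    update ((funSplitAt i D).symm (c, r)) i d = (funSplitAt i D).symm (d, r) := by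
  funext j
  by_cases hj : j = i
  · subst hj; simp
  · simp [hj]

theorem prod_funSplitAt_symm [Fintype ι] {M : Type*} [CommMonoid M] (f : ι → D → M) (c : D)
    (r : {j // j ≠ i} → D) :
    ∏ j, f j ((funSplitAt i D).symm (c, r) j) = f i c * ∏ j : {j // j ≠ i}, f j (r j) := by
  rw [Fintype.prod_eq_mul_prod_subtype_ne _ i, funSplitAt_symm_apply_self]
  congr 1
  refine Fintype.prod_congr _ _ fun j => ?_
  simp [dif_neg j.2]

end Equiv

section ProductWeights

variable {ι D R : Type*} [Fintype ι] [DecidableEq ι] [Fintype D] [CommSemiring R]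
  (f : ι → D → R) (g : (ι → D) → R) (i : ι) (d : D)

theorem sum_prod_mul_comp_update :
    ∑ x, (∏ j, f j (x j)) * g (update x i d)
      = (∑ c, f i c) * ∑ r : {j // j ≠ i} → D,
          (∏ j : {j // j ≠ i}, f j (r j)) * g ((Equiv.funSplitAt i D).symm (d, r)) := by
  rw [← (Equiv.funSplitAt i D).symm.sum_comp, Fintype.sum_prod_type, Finset.sum_mul]
  refine Fintype.sum_congr _ _ fun c => ?_
  rw [Finset.mul_sum]
  refine Fintype.sum_congr _ _ fun r => ?_
  rw [Equiv.prod_funSplitAt_symm, Equiv.update_funSplitAt_symm, mul_assoc]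

theorem sum_filter_apply_eq_prod_mul [DecidableEq D] :
    ∑ x ∈ univ.filter (fun x : ι → D => x i = d), (∏ j, f j (x j)) * g x
      = f i d * ∑ r : {j // j ≠ i} → D,
          (∏ j : {j // j ≠ i}, f j (r j)) * g ((Equiv.funSplitAt i D).symm (d, r)) := by
  rw [Finset.sum_filter, ← (Equiv.funSplitAt i D).symm.sum_comp, Fintype.sum_prod_type]
  simp only [Equiv.funSplitAt_symm_apply_self, Finset.sum_ite_irrel, Finset.sum_const_zero]
  rw [Finset.sum_ite_eq' univ d, if_pos (mem_univ d), Finset.mul_sum]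
  refine Fintype.sum_congr _ _ fun r => ?_
  rw [Equiv.prod_funSplitAt_symm, mul_assoc]

theorem sum_mul_sum_filter_prod_mul_eq_mul_sum_prod_mul_update [DecidableEq D] :
    (∑ c, f i c) * ∑ x ∈ univ.filter (fun x : ι → D => x i = d), (∏ j, f j (x j)) * g x
      = f i d * ∑ x, (∏ j, f j (x j)) * g (update x i d) := by
  rw [sum_filter_apply_eq_prod_mul, sum_prod_mul_comp_update, mul_left_comm]

end ProductWeights

theorem conditioning_eq_intervening_for_independent_data_general
    {n : ℕ} {D O : Type} [Fintype D] [DecidableEq D]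
    (A : (Fin n → D) → PMF O) (P : PMF (Fin n → D)) (μ : Fin n → PMF D)
    (hprod : ∀ x : Fin n → D, P x = ∏ i : Fin n, μ i (x i))
    (i : Fin n) (d : D) (hd : μ i d > 0) (o : O) :
    (∑ x ∈ Finset.univ.filter (fun x : Fin n → D => x i = d), P x * A x o) /
        (∑ x ∈ Finset.univ.filter (fun x : Fin n → D => x i = d), P x)
      = ∑ x : Fin n → D, P x * A (Function.update x i d) o := by
  have key : ∀ g : (Fin n → D) → ℝ≥0∞,
      ∑ x ∈ univ.filter (fun x : Fin n → D => x i = d), P x * g x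
        = μ i d * ∑ x, P x * g (update x i d) := by
    intro g
    simpa only [hprod, (μ i).sum_coe, one_mul] using
      sum_mul_sum_filter_prod_mul_eq_mul_sum_prod_mul_update (fun j => μ j) g i d
  have hden : ∑ x ∈ univ.filter (fun x : Fin n → D => x i = d), P x = μ i d := by
    simpa only [Pi.one_apply, mul_one, P.sum_coe] using key 1
  rw [key, hden, mul_comm, ENNReal.mul_div_cancel_right hd.ne' ((μ i).apply_ne_top d)]

theorem conditioning_eq_intervening_for_independent_data
    {n : ℕ} {D O : Type} [Fintype D] [DecidableEq D] [Nonempty D] [Fintype O] [Nonempty O]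
    (A : (Fin n → D) → PMF O) (P : PMF (Fin n → D)) (μ : Fin n → PMF D)
    (hprod : ∀ x : Fin n → D, P x = ∏ i : Fin n, μ i (x i))
    (i : Fin n) (d : D) (hd : μ i d > 0) (o : O) :
    (∑ x ∈ Finset.univ.filter (fun x : Fin n → D => x i = d), P x * A x o) /
        (∑ x ∈ Finset.univ.filter (fun x : Fin n → D => x i = d), P x)
      = ∑ x : Fin n → D, P x * A (Function.update x i d) o :=
  conditioning_eq_intervening_for_independent_data_general A P μ hprod i d hd o
end

section
/- (Sequential composition of bounded relative probability.) Let X, Y₁, Y₂ be nonempty finite types and ε₁, ε₂ : ℝ. Suppose A₁ : X → PMF Y₁ satisfies ε₁-bounded relative probability, i.e., for all x, x' : X and y₁ : Y₁, A₁ x y₁ ≤ ENNReal.ofReal (Real.exp ε₁) * A₁ x' y₁; and suppose A₂ : X → Y₁ → PMF Y₂ satisfies, for all x, x' : X, y₁ : Y₁, and y₂ : Y₂, A₂ x y₁ y₂ ≤ ENNReal.ofReal (Real.exp ε₂) * A₂ x' y₁ y₂. Then the composed mechanism M : X → PMF (Y₁ × Y₂) defined by M x = (A₁ x).bind (fun y₁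 => (A₂ x y₁).map (fun y₂ => (y₁, y₂))) satisfies (ε₁ + ε₂)-bounded relative probability: for all x, x' : X and all (y₁, y₂) : Y₁ × Y₂, M x (y₁, y₂) ≤ ENNReal.ofReal (Real.exp (ε₁ + ε₂)) * M x' (y₁, y₂). -/
theorem brp_sequential_composition
    {X Y₁ Y₂ : Type} [Fintype X] [Nonempty X] [Fintype Y₁] [Nonempty Y₁]
    [Fintype Y₂] [Nonempty Y₂] (ε₁ ε₂ : ℝ)
    (A₁ : X → PMF Y₁) (A₂ : X → Y₁ → PMF Y₂)
    (h₁ : ∀ (x x' : X) (y₁ : Y₁), A₁ x y₁ ≤ ENNReal.ofReal (Real.exp ε₁) * A₁ x' y₁)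
    (h₂ : ∀ (x x' : X) (y₁ : Y₁) (y₂ : Y₂),
        A₂ x y₁ y₂ ≤ ENNReal.ofReal (Real.exp ε₂) * A₂ x' y₁ y₂) :
    ∀ (x x' : X) (y₁ : Y₁) (y₂ : Y₂),
      ((A₁ x).bind (fun y₁ => (A₂ x y₁).map (fun y₂ => (y₁, y₂)))) (y₁, y₂)
        ≤ ENNReal.ofReal (Real.exp (ε₁ + ε₂)) *
          ((A₁ x').bind (fun y₁ => (A₂ x' y₁).map (fun y₂ => (y₁, y₂)))) (y₁, y₂) := by
  intro x x' y₁ y₂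
  classical
  have key : ∀ (z : X),
      ((A₁ z).bind (fun a => (A₂ z a).map (fun b => (a, b)))) (y₁, y₂)
        = A₁ z y₁ * A₂ z y₁ y₂ := by
    intro z
    rw [PMF.bind_apply, tsum_eq_single y₁]
    · rw [PMF.map_apply, tsum_eq_single y₂]
      · simp
      · intro b hb
        simp [Prod.ext_iff, Ne.symm hb]
    · intro a ha
      rw [PMF.map_apply]
      have : ∀ b : Y₂, ((y₁, y₂) = (a, b)) ↔ False := by
        intro b; simp [Prod.ext_iff]; intro h; exact absurd h.symm ha
      simp [this]
  rw [key x, key x', Real.exp_add, ENNReal.ofReal_mul (Real.exp_nonneg _)]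
  calc A₁ x y₁ * A₂ x y₁ y₂
      ≤ (ENNReal.ofReal (Real.exp ε₁) * A₁ x' y₁)
        * (ENNReal.ofReal (Real.exp ε₂) * A₂ x' y₁ y₂) :=
        mul_le_mul' (h₁ x x' y₁) (h₂ x x' y₁ y₂)
    _ = ENNReal.ofReal (Real.exp ε₁) * ENNReal.ofReal (Real.exp ε₂)
        * (A₁ x' y₁ * A₂ x' y₁ y₂) := by ring
end

section
/- (Postprocessing preserves bounded relative probability.) Let X, Y, Z be nonempty finite types and ε : ℝ. If A : X → PMF Y has ε-bounded relative probability, i.e., for all x, x' : X and y : Y, A x y ≤ ENNReal.ofReal (Real.exp ε) * A x' y, then for every (possibly randomized) postprocessing map f : Y → PMF Z that does not depend on x, the composed mechanism x ↦ (A x).bind f also has ε-bounded relative probability: for all x, x' : X and z : Z, ((A x).bind f) z ≤ ENNReal.ofReal (Real.exp ε) * ((A x').bind f) z. -/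
theorem brp_postprocessing
    {X Y Z : Type} [Fintype X] [Nonempty X] [Fintype Y] [Nonempty Y]
    [Fintype Z] [Nonempty Z] (ε : ℝ)
    (A : X → PMF Y)
    (h : ∀ (x x' : X) (y : Y), A x y ≤ ENNReal.ofReal (Real.exp ε) * A x' y)
    (f : Y → PMF Z) :
    ∀ (x x' : X) (z : Z),
      ((A x).bind f) z ≤ ENNReal.ofReal (Real.exp ε) * ((A x').bind f) z := by
  intro x x' z
  simp only [PMF.bind_apply]
  rw [← ENNReal.tsum_mul_left]
  refine ENNReal.tsum_le_tsum fun y => ?_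
  rw [← mul_assoc]
  exact mul_le_mul_left (h x x' y) _
end

section
/- (Group privacy: changing several data points.) If a randomized algorithm A : (Fin n → D) → PMF O is ε-differentially private with ε ≥ 0, then for any two databases x, x' : Fin n → D and every output o : O, A x o ≤ ENNReal.ofReal (Real.exp (ε * k)) * A x' o, where k is the number of indices i : Fin n with x i ≠ x' i. In particular, a change that alters two data points changes output probabilities by at most a factor e^{2ε}, and a change altering all n data points by at most a factor e^{nε}. -/
theorem dp_group_privacy
    {n : ℕ} {D O : Type} [Fintype D] [DecidableEq D] [Nonempty D] [Fintype O] [Nonempty O]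
    (A : (Fin n → D) → PMF O) (ε : ℝ) (hε : 0 ≤ ε)
    (hdp : ∀ (x : Fin n → D) (i : Fin n) (d' : D) (o : O),
        A x o ≤ ENNReal.ofReal (Real.exp ε) * A (Function.update x i d') o) :
    ∀ (x x' : Fin n → D) (o : O),
      A x o ≤ ENNReal.ofReal
          (Real.exp (ε * (Finset.univ.filter (fun i : Fin n => x i ≠ x' i)).card)) * A x' o := by
  suffices h : ∀ (k : ℕ) (x x' : Fin n → D) (o : O),
      (Finset.univ.filter (fun i : Fin n => x i ≠ x' i)).card = k →
      A x o ≤ ENNReal.ofReal (Real.exp (ε * k)) * A x' o by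
    intro x x' o
    exact h _ x x' o rfl
  intro k
  induction k with
  | zero =>
    intro x x' o hcard
    have hxx : x = x' := by
      funext i
      by_contra hne
      have : i ∈ Finset.univ.filter (fun i : Fin n => x i ≠ x' i) := by
        simp [hne]
      rw [Finset.card_eq_zero] at hcard
      simp [hcard] at this
    subst hxx
    simp
  | succ k ih =>
    intro x x' o hcard
    have hne : (Finset.univ.filter (fun i : Fin n => x i ≠ x' i)).Nonempty := by
      rw [← Finset.card_pos, hcard]; omega
    obtain ⟨i, hi⟩ := hne
    simp only [Finset.mem_filter] at hi
    set y := Function.update x i (x' i) with hy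
    have hyset : Finset.univ.filter (fun j : Fin n => y j ≠ x' j)
        = (Finset.univ.filter (fun j : Fin n => x j ≠ x' j)).erase i := by
      ext j
      simp only [Finset.mem_filter, Finset.mem_erase, Finset.mem_univ, true_and]
      by_cases hj : j = i
      · subst hj
        simp [hy, Function.update_self]
      · simp [hy, Function.update_of_ne hj, hj]
    have hycard : (Finset.univ.filter (fun j : Fin n => y j ≠ x' j)).card = k := by
      rw [hyset, Finset.card_erase_of_mem (by simp [hi.2]), hcard]; omega
    have h1 : A x o ≤ ENNReal.ofReal (Real.exp ε) * A y o := hdp x i (x' i) o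
    have h2 : A y o ≤ ENNReal.ofReal (Real.exp (ε * k)) * A x' o := ih y x' o hycard
    calc A x o ≤ ENNReal.ofReal (Real.exp ε) * A y o := h1
      _ ≤ ENNReal.ofReal (Real.exp ε) * (ENNReal.ofReal (Real.exp (ε * k)) * A x' o) := by
          exact mul_le_mul_right h2 _
      _ = ENNReal.ofReal (Real.exp (ε * (k + 1 : ℕ))) * A x' o := by
          rw [← mul_assoc, ← ENNReal.ofReal_mul (Real.exp_pos _).le, ← Real.exp_add]
          congr 2
          push_cast
          ring
end

section
/- (Stability of posterior beliefs under a data point's intervention.) Suppose A : (Fin n → D) → PMF O is ε-differentially private with ε ≥ 0. Fix a prior P : PMF (Fin n → D), an index i : Fin n, a replacement value d' : D, and an output o : O with ∑_{x̂} P x̂ * A x̂ o > 0. Define the posterior Post(x ∣ o) = (P x * A x o) / (∑_{x̂} P x̂ * A x̂ o) and the counterfactual posterior Post'(x ∣ o) = (P x * A (Function.update x i d') o) / (∑_{x̂} P x̂ * A (Function.update x̂ i d') o), in which individual i's data is replaced by d'. Then for every database x : Fin n → D, Post(x ∣ o) ≤ ENNReal.ofReal (Real.exp (2 * ε)) * Post'(x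 ∣ o) and Post'(x ∣ o) ≤ ENNReal.ofReal (Real.exp (2 * ε)) * Post(x ∣ o). -/
lemma aux_div_le_div {a a' b b' k : ENNReal} (hk0 : k ≠ 0) (hkt : k ≠ ⊤)
    (ha : a ≤ k * a') (hb : b' ≤ k * b) : a / b ≤ k * k * (a' / b') := by
  have hinv : b⁻¹ ≤ k * b'⁻¹ := by
    have h1 : (k * b)⁻¹ ≤ b'⁻¹ := ENNReal.inv_le_inv.mpr hb
    have h2 : (k * b)⁻¹ = k⁻¹ * b⁻¹ := ENNReal.mul_inv (Or.inl hk0) (Or.inl hkt)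
    calc b⁻¹ = k * (k⁻¹ * b⁻¹) := by
          rw [← mul_assoc, ENNReal.mul_inv_cancel hk0 hkt, one_mul]
      _ ≤ k * b'⁻¹ := by
          exact mul_le_mul' le_rfl (h2 ▸ h1)
  calc a / b = a * b⁻¹ := rfl
    _ ≤ (k * a') * (k * b'⁻¹) := mul_le_mul' ha hinv
    _ = k * k * (a' * b'⁻¹) := by ring
    _ = k * k * (a' / b') := rfl

theorem posterior_stability_under_intervention
    {n : ℕ} {D O : Type} [Fintype D] [Nonempty D] [Fintype O] [Nonempty O]
    (A : (Fin n → D) → PMF O) (ε : ℝ) (hε : 0 ≤ ε)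
    (hdp : ∀ (x : Fin n → D) (i : Fin n) (d' : D) (o : O),
        A x o ≤ ENNReal.ofReal (Real.exp ε) * A (Function.update x i d') o)
    (P : PMF (Fin n → D)) (i : Fin n) (d' : D) (o : O)
    (hpos : (∑ y : Fin n → D, P y * A y o) > 0) :
    ∀ x : Fin n → D,
      (P x * A x o) / (∑ y : Fin n → D, P y * A y o)
        ≤ ENNReal.ofReal (Real.exp (2 * ε)) *
          ((P x * A (Function.update x i d') o) /
            (∑ y : Fin n → D, P y * A (Function.update y i d') o)) ∧
      (P x * A (Function.update x i d') o) /
          (∑ y : Fin n → D, P y * A (Function.update y i d') o)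
        ≤ ENNReal.ofReal (Real.exp (2 * ε)) *
          ((P x * A x o) / (∑ y : Fin n → D, P y * A y o)) := by
  intro x
  set k := ENNReal.ofReal (Real.exp ε) with hk
  have hk0 : k ≠ 0 := by
    simp [hk, ENNReal.ofReal_pos, Real.exp_pos]
  have hkt : k ≠ ⊤ := ENNReal.ofReal_ne_top
  have hkk : ENNReal.ofReal (Real.exp (2 * ε)) = k * k := by
    rw [two_mul, Real.exp_add, hk, ENNReal.ofReal_mul (Real.exp_pos ε).le]
  have hdp2 : ∀ (y : Fin n → D), A (Function.update y i d') o ≤ k * A y o := by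
    intro y
    have := hdp (Function.update y i d') i (y i) o
    rwa [Function.update_idem, Function.update_eq_self] at this
  have hnum1 : ∀ (y : Fin n → D), P y * A y o ≤ k * (P y * A (Function.update y i d') o) := by
    intro y
    calc P y * A y o ≤ P y * (k * A (Function.update y i d') o) :=
          mul_le_mul' le_rfl (hdp y i d' o)
      _ = k * (P y * A (Function.update y i d') o) := by ring
  have hnum2 : ∀ (y : Fin n → D), P y * A (Function.update y i d') o ≤ k * (P y * A y o) := by
    intro y
    calc P y * A (Function.update y i d') o ≤ P y * (k * A y o) :=
          mul_le_mul' le_rfl (hdp2 y)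
      _ = k * (P y * A y o) := by ring
  have hsum1 : (∑ y : Fin n → D, P y * A y o)
      ≤ k * ∑ y : Fin n → D, P y * A (Function.update y i d') o := by
    rw [Finset.mul_sum]; exact Finset.sum_le_sum fun y _ => hnum1 y
  have hsum2 : (∑ y : Fin n → D, P y * A (Function.update y i d') o)
      ≤ k * ∑ y : Fin n → D, P y * A y o := by
    rw [Finset.mul_sum]; exact Finset.sum_le_sum fun y _ => hnum2 y
  rw [hkk]
  exact ⟨aux_div_le_div hk0 hkt (hnum1 x) hsum2, aux_div_le_div hk0 hkt (hnum2 x) hsum1⟩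
end
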